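/- For every subset S ⊆ {1, …, n} and every integer t ≥ 0, the element ε̄_S μ^{t p^{n+1}} lies in K, i.e. both (ε̄_S μ^{t p^{n+1}}) ∩ c_{p^n} = 0 and σ(ε̄_S μ^{t p^{n+1}}) ∩ c_{p^n} = 0. Consequently the free 𝔽_p[μ^{p^{n+1}}]-module Λ(ε̄_1, …, ε̄_n) ⊗ 𝔽_p[μ^{p^{n+1}}] is contained in K. -/

import Mathlib

/-- Index of the monomial basis `ε_S μ^k` of `A = 𝔽_p[μ] ⊗ Λ(ε_0, …, ε_n)`. -/
abbrev Idx (n : ℕ) := Finset (Fin (n + 1)) × ℕ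

/-- The underlying `𝔽_p`-vector space of `A = 𝔽_p[μ] ⊗ Λ(ε_0, …, ε_n)`,
with basis the monomials `ε_S μ^k`. -/
abbrev A (p n : ℕ) := Idx n →₀ ZMod p

/-- The monomial `μ^k`. -/
noncomputable def mup (p n k : ℕ) : A p n :=
  Finsupp.single ((∅ : Finset (Fin (n + 1))), k) (1 : ZMod p)

/-- Koszul sign occurring when multiplying `ε_S` by `ε_T`: `(−1)^{#{(s,t) ∈ S×T : t < s}}`. -/
noncomputable def msign (p n : ℕ) (S T : Finset (Fin (n + 1))) : ZMod p :=
  (-1 : ZMod p) ^ ((S ×ˢ T).filter (fun st => st.2 < st.1)).card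

/-- Product of two basis monomials of `A`. -/
noncomputable def mulB (p n : ℕ) (b c : Idx n) : A p n :=
  if Disjoint b.1 c.1 then
    msign p n b.1 c.1 • Finsupp.single (b.1 ∪ c.1, b.2 + c.2) (1 : ZMod p)
  else 0

/-- The graded-commutative multiplication of `A`, extended bilinearly from monomials. -/
noncomputable def mul (p n : ℕ) (x y : A p n) : A p n :=
  x.sum fun b a => y.sum fun c d => (a * d) • mulB p n b c

/-- The `σ` operator: the `𝔽_p[μ]`-linear graded derivation with `σ(ε_i) = μ^{p^i}`,
given on a basis monomial `ε_{i₁}⋯ε_{i_m} μ^k` (with `i₁ < ⋯ < i_m`) by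
`Σ_j (−1)^{j−1} ε_{i₁}⋯ε_{i_{j−1}} ε_{i_{j+1}}⋯ε_{i_m} μ^{k + p^{i_j}}`. -/
noncomputable def sigma (p n : ℕ) : A p n →ₗ[ZMod p] A p n :=
  Finsupp.lsum (ZMod p) fun b =>
    LinearMap.toSpanSingleton (ZMod p) (A p n)
      (∑ s ∈ b.1, ((-1 : ZMod p) ^ (b.1.filter (· < s)).card) •
        Finsupp.single (b.1.erase s, b.2 + p ^ (s : ℕ)) (1 : ZMod p))

/-- The cap product operator `− ∩ c_m`, with `(ε_S μ^j) ∩ c_m = C(j, m)·ε_S μ^{j−m}`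
(zero when `j < m`, since then `C(j, m) = 0`). -/
noncomputable def cap (p n m : ℕ) : A p n →ₗ[ZMod p] A p n :=
  Finsupp.lsum (ZMod p) fun b =>
    LinearMap.toSpanSingleton (ZMod p) (A p n)
      ((Nat.choose b.2 m : ZMod p) • Finsupp.single (b.1, b.2 - m) (1 : ZMod p))

open Fin.NatCast in
/-- `ε̄_i := ε_i − μ^{p^i − p^{i−1}} ε_{i−1}`. -/
noncomputable def ebar (p n : ℕ) (i : ℕ) : A p n :=
  Finsupp.single (({(i : Fin (n + 1))} : Finset (Fin (n + 1))), 0) (1 : ZMod p)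
    - Finsupp.single (({((i - 1 : ℕ) : Fin (n + 1))} : Finset (Fin (n + 1))),
        p ^ i - p ^ (i - 1)) (1 : ZMod p)

/-- `ε̄_S`: the product of the `ε̄_s` for `s ∈ S`, taken in increasing order of `s`
(with `ε̄_∅ = 1`). -/
noncomputable def ebarProd (p n : ℕ) (S : Finset ℕ) : A p n :=
  (S.sort (· ≤ ·)).foldr (fun s acc => mul p n (ebar p n s) acc) (mup p n 0)

-- basic lemmas
theorem sigma_single (p n : ℕ) (b : Idx n) (c : ZMod p) :
    sigma p n (Finsupp.single b c) =
      c • ∑ s ∈ b.1, ((-1 : ZMod p) ^ (b.1.filter (· < s)).card) •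
        Finsupp.single (b.1.erase s, b.2 + p ^ (s : ℕ)) (1 : ZMod p) := by
  simp [sigma, Finsupp.lsum_single, LinearMap.toSpanSingleton_apply]

theorem cap_single (p n m : ℕ) (b : Idx n) (c : ZMod p) :
    cap p n m (Finsupp.single b c) =
      c • ((Nat.choose b.2 m : ZMod p) • Finsupp.single (b.1, b.2 - m) (1 : ZMod p)) := by
  simp [cap, Finsupp.lsum_single, LinearMap.toSpanSingleton_apply]

theorem mul_single_left (p n : ℕ) (b : Idx n) (a : ZMod p) (y : A p n) :
    mul p n (Finsupp.single b a) y = y.sum fun c d => (a * d) • mulB p n b c := by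
  rw [mul, Finsupp.sum_single_index]
  simp

/-- `mul` with fixed left argument, as a linear map. -/
noncomputable def mulLeft (p n : ℕ) (x : A p n) : A p n →ₗ[ZMod p] A p n :=
  Finsupp.lsum (ZMod p) fun c =>
    LinearMap.toSpanSingleton (ZMod p) (A p n) (x.sum fun b a => a • mulB p n b c)

theorem mul_eq_mulLeft (p n : ℕ) (x y : A p n) : mul p n x y = mulLeft p n x y := by
  rw [mul, Finsupp.sum_comm]
  rw [mulLeft, Finsupp.lsum_apply, Finsupp.sum_congr]
  intro c hc
  rw [LinearMap.toSpanSingleton_apply, Finsupp.smul_sum]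
  apply Finsupp.sum_congr
  intro b hb
  rw [smul_smul, mul_comm]

theorem mul_sub_left (p n : ℕ) (u v z : A p n) :
    mul p n (u - v) z = mul p n u z - mul p n v z := by
  unfold mul
  rw [Finsupp.sum_sub_index]
  intro b a1 a2
  rw [← Finsupp.sum_sub]
  congr 1; funext c d
  rw [sub_mul, sub_smul]

theorem mul_eps_single_notmem (p n : ℕ) (i : Fin (n + 1)) (e : ℕ) (T : Finset (Fin (n + 1)))
    (k : ℕ) (c : ZMod p) (hi : i ∉ T) (h2 : ∀ t ∈ T, ¬ t < i) :
    mul p n (Finsupp.single ({i}, e) 1) (Finsupp.single (T, k) c)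
      = c • Finsupp.single (insert i T, e + k) (1 : ZMod p) := by
  rw [mul_single_left, Finsupp.sum_single_index (by simp)]
  rw [mulB]
  have hd : Disjoint ({i} : Finset (Fin (n+1))) T := Finset.disjoint_singleton_left.mpr hi
  rw [if_pos hd]
  have hs : msign p n {i} T = 1 := by
    rw [msign]
    have : (({i} : Finset (Fin (n+1))) ×ˢ T).filter (fun st => st.2 < st.1) = ∅ := by
      apply Finset.filter_eq_empty_iff.mpr
      rintro ⟨x, y⟩ hxy
      simp only [Finset.mem_product, Finset.mem_singleton] at hxy
      exact fun h => h2 y hxy.2 (hxy.1 ▸ h)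
    rw [this]; simp
  rw [hs, one_smul, one_mul,
    show ({i} : Finset (Fin (n+1))) ∪ T = insert i T from (Finset.insert_eq i T).symm]

theorem mul_eps_single_mem (p n : ℕ) (i : Fin (n + 1)) (e : ℕ) (T : Finset (Fin (n + 1)))
    (k : ℕ) (c : ZMod p) (hi : i ∈ T) :
    mul p n (Finsupp.single ({i}, e) 1) (Finsupp.single (T, k) c) = 0 := by
  rw [mul_single_left, Finsupp.sum_single_index (by simp)]
  rw [mulB]
  have hd : ¬ Disjoint ({i} : Finset (Fin (n+1))) T := by
    simp [Finset.disjoint_singleton_left, hi]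
  rw [if_neg hd, smul_zero]

theorem sigma_insert_single (p n : ℕ) (i : Fin (n + 1)) (T : Finset (Fin (n + 1))) (e : ℕ)
    (hi : i ∉ T) (h2 : ∀ t ∈ T, ¬ t < i) :
    sigma p n (Finsupp.single (insert i T, e) 1)
      = Finsupp.single (T, e + p ^ (i : ℕ)) 1
        - ∑ u ∈ T, ((-1 : ZMod p) ^ (T.filter (· < u)).card) •
            Finsupp.single (insert i (T.erase u), e + p ^ (u : ℕ)) (1 : ZMod p) := by
  rw [sigma_single, one_smul, Finset.sum_insert hi]
  have hterm : ((-1 : ZMod p) ^ (((insert i T).filter (· < i)).card)) •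
      Finsupp.single ((insert i T).erase i, e + p ^ (i : ℕ)) (1 : ZMod p)
      = Finsupp.single (T, e + p ^ (i : ℕ)) 1 := by
    have hfilter : (insert i T).filter (· < i) = ∅ := by
      rw [Finset.filter_insert, if_neg (lt_irrefl i)]
      exact Finset.filter_eq_empty_iff.mpr h2
    rw [hfilter, Finset.erase_insert hi]
    simp
  rw [hterm]
  rw [sub_eq_add_neg, ← Finset.sum_neg_distrib]
  congr 1
  apply Finset.sum_congr rfl
  intro u hu
  have hiu : i ≠ u := fun h => hi (h ▸ hu)
  have hilt : i < u := by
    rcases lt_or_ge i u with h | h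
    · exact h
    · exact ((h2 u hu) (lt_of_le_of_ne h (Ne.symm hiu))).elim
  have hfilter : (insert i T).filter (· < u) = insert i (T.filter (· < u)) := by
    rw [Finset.filter_insert, if_pos hilt]
  have hcard : ((insert i T).filter (· < u)).card = (T.filter (· < u)).card + 1 := by
    rw [hfilter, Finset.card_insert_of_notMem (fun h => hi (Finset.filter_subset _ _ h))]
  rw [hcard, Finset.erase_insert_of_ne hiu, pow_succ, mul_comm, neg_one_mul, neg_smul]

open Fin.NatCast in
theorem star1 (p n s : ℕ) (hp : 1 ≤ p) (hs1 : 1 ≤ s) (hsn : s ≤ n)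
    (T : Finset (Fin (n+1))) (k : ℕ) (hT : ∀ t ∈ T, s ≤ (t:ℕ)) :
    sigma p n (mul p n (ebar p n s) (Finsupp.single (T,k) 1))
      = - mul p n (ebar p n s) (sigma p n (Finsupp.single (T,k) (1 : ZMod p))) := by
  set i1 : Fin (n+1) := (s : Fin (n+1)) with hi1def
  set i0 : Fin (n+1) := ((s-1 : ℕ) : Fin (n+1)) with hi0def
  set a : ℕ := p^s - p^(s-1) with hadef
  have hv1 : (i1:ℕ) = s := Fin.val_cast_of_lt (by omega)
  have hv0 : (i0:ℕ) = s - 1 := Fin.val_cast_of_lt (by omega)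
  have h2i1 : ∀ t ∈ T, ¬ t < i1 := by
    intro t ht hlt; have := hT t ht; rw [Fin.lt_def, hv1] at hlt; omega
  have hi0T : i0 ∉ T := by intro h; have := hT _ h; rw [hv0] at this; omega
  have h2i0 : ∀ t ∈ T, ¬ t < i0 := by
    intro t ht hlt; have := hT t ht; rw [Fin.lt_def, hv0] at hlt; omega
  have hple : p^(s-1) ≤ p^s := Nat.pow_le_pow_right hp (by omega)
  have hexp : a + k + p^(s-1) = k + p^s := by rw [hadef]; omega
  have hebar : ebar p n s = Finsupp.single ({i1}, 0) (1:ZMod p) - Finsupp.single ({i0}, a) 1 := rfl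
  -- sigma of the base monomial
  have hsig : sigma p n (Finsupp.single (T,k) (1:ZMod p)) =
      ∑ u ∈ T, ((-1 : ZMod p) ^ (T.filter (· < u)).card) •
        Finsupp.single (T.erase u, k + p ^ (u:ℕ)) 1 := by
    rw [sigma_single, one_smul]
  -- per-term product computation
  have hmulu : ∀ (T' : Finset (Fin (n+1))) (k' : ℕ), T' ⊆ T →
      mul p n (ebar p n s) (Finsupp.single (T', k') (1 : ZMod p)) =
        (if i1 ∈ T' then 0 else Finsupp.single (insert i1 T', k') 1)
          - Finsupp.single (insert i0 T', a + k') 1 := by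
    intro T' k' hsub
    rw [hebar, mul_sub_left]
    congr 1
    · by_cases h : i1 ∈ T'
      · rw [if_pos h, mul_eps_single_mem p n i1 0 T' k' 1 h]
      · rw [if_neg h, mul_eps_single_notmem p n i1 0 T' k' 1 h
          (fun t ht => h2i1 t (hsub ht)), one_smul, zero_add]
    · rw [mul_eps_single_notmem p n i0 a T' k' 1 (fun h => hi0T (hsub h))
        (fun t ht => h2i0 t (hsub ht)), one_smul]
  -- RHS as a sum
  have hRHS : mul p n (ebar p n s) (sigma p n (Finsupp.single (T,k) (1:ZMod p))) =
      ∑ u ∈ T, ((-1 : ZMod p) ^ (T.filter (· < u)).card) •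
        ((if i1 ∈ T.erase u then 0
            else Finsupp.single (insert i1 (T.erase u), k + p ^ (u:ℕ)) 1)
          - Finsupp.single (insert i0 (T.erase u), a + (k + p ^ (u:ℕ))) 1) := by
    rw [hsig, mul_eq_mulLeft, map_sum]
    refine Finset.sum_congr rfl fun u hu => ?_
    rw [map_smul, ← mul_eq_mulLeft, hmulu _ _ (Finset.erase_subset _ _)]
  -- LHS base product
  have hmulT := hmulu T k (le_refl T)
  by_cases hmem : i1 ∈ T
  · -- case i1 ∈ T
    rw [hmulT, if_pos hmem, zero_sub, map_neg, hRHS]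
    rw [sigma_insert_single p n i0 T (a + k) hi0T h2i0]
    rw [hv0, hexp]
    have hsplit : ∀ u ∈ T,
        ((-1 : ZMod p) ^ (T.filter (· < u)).card) •
          ((if i1 ∈ T.erase u then 0
              else Finsupp.single (insert i1 (T.erase u), k + p ^ (u:ℕ)) 1)
            - Finsupp.single (insert i0 (T.erase u), a + (k + p ^ (u:ℕ))) 1)
        = (if u = i1 then Finsupp.single (T, k + p ^ s) (1 : ZMod p) else 0)
            - ((-1 : ZMod p) ^ (T.filter (· < u)).card) •
              Finsupp.single (insert i0 (T.erase u), a + k + p ^ (u:ℕ)) 1 := by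
      intro u hu
      have h2 : a + (k + p ^ (u:ℕ)) = a + k + p ^ (u:ℕ) := (Nat.add_assoc _ _ _).symm
      rw [smul_sub, h2]
      congr 1
      by_cases h : u = i1
      · rw [if_pos h, h, if_neg (Finset.notMem_erase i1 T)]
        have hc0 : (T.filter (· < i1)).card = 0 := by
          rw [Finset.card_eq_zero, Finset.filter_eq_empty_iff]
          exact h2i1
        rw [hc0, pow_zero, one_smul, Finset.insert_erase hmem, hv1]
      · rw [if_neg h, if_pos (Finset.mem_erase.mpr ⟨fun hh => h hh.symm, hmem⟩), smul_zero]
    rw [Finset.sum_congr rfl hsplit, Finset.sum_sub_distrib, Finset.sum_ite_eq' T i1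
      (fun _ => Finsupp.single (T, k + p ^ s) (1 : ZMod p)), if_pos hmem]
  · -- case i1 ∉ T
    rw [hmulT, if_neg hmem, map_sub, hRHS]
    have h2i1' : ∀ t ∈ T, ¬ t < i1 := h2i1
    rw [sigma_insert_single p n i1 T k hmem h2i1', sigma_insert_single p n i0 T (a+k) hi0T h2i0]
    rw [hv1, hv0, hexp]
    have hsplit : ∀ u ∈ T,
        ((-1 : ZMod p) ^ (T.filter (· < u)).card) •
          ((if i1 ∈ T.erase u then 0
              else Finsupp.single (insert i1 (T.erase u), k + p ^ (u:ℕ)) 1)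
            - Finsupp.single (insert i0 (T.erase u), a + (k + p ^ (u:ℕ))) 1)
        = ((-1 : ZMod p) ^ (T.filter (· < u)).card) •
              Finsupp.single (insert i1 (T.erase u), k + p ^ (u:ℕ)) (1 : ZMod p)
          - ((-1 : ZMod p) ^ (T.filter (· < u)).card) •
              Finsupp.single (insert i0 (T.erase u), a + k + p ^ (u:ℕ)) (1 : ZMod p) := by
      intro u hu
      have h2 : a + (k + p ^ (u:ℕ)) = a + k + p ^ (u:ℕ) := (Nat.add_assoc _ _ _).symm
      rw [smul_sub, h2, if_neg (fun hh => hmem (Finset.mem_of_mem_erase hh))]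
    rw [Finset.sum_congr rfl hsplit, Finset.sum_sub_distrib]
    abel

theorem mul_smul_right (p n : ℕ) (x : A p n) (c : ZMod p) (z : A p n) :
    mul p n x (c • z) = c • mul p n x z := by
  rw [mul_eq_mulLeft, map_smul, mul_eq_mulLeft]

theorem single_eq_smul_one (p n : ℕ) (b : Idx n) (c : ZMod p) :
    (Finsupp.single b c : A p n) = c • Finsupp.single b 1 := by
  rw [Finsupp.smul_single, smul_eq_mul, mul_one]

theorem star (p n s : ℕ) (hp : 1 ≤ p) (hs1 : 1 ≤ s) (hsn : s ≤ n)
    (b : Idx n) (c : ZMod p) (hT : ∀ t ∈ b.1, s ≤ (t:ℕ)) :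
    sigma p n (mul p n (ebar p n s) (Finsupp.single b c))
      = - mul p n (ebar p n s) (sigma p n (Finsupp.single b c)) := by
  obtain ⟨T, k⟩ := b
  rw [single_eq_smul_one, mul_smul_right, map_smul, map_smul, mul_smul_right,
    star1 p n s hp hs1 hsn T k hT, smul_neg]

theorem finsupp_decomp (p n : ℕ) (y : A p n) :
    y = ∑ b ∈ y.support, Finsupp.single b (y b) :=
  (Finsupp.sum_single y).symm

theorem mul_expand (p n : ℕ) (x y : A p n) :
    mul p n x y = ∑ b ∈ y.support, mul p n x (Finsupp.single b (y b)) := by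
  conv_lhs => rw [finsupp_decomp p n y]
  simp only [mul_eq_mulLeft]
  exact map_sum _ _ _

theorem sigma_mul_ebar (p n s : ℕ) (hp : 1 ≤ p) (hs1 : 1 ≤ s) (hsn : s ≤ n)
    (y : A p n) (hy : ∀ b ∈ y.support, ∀ t ∈ b.1, s ≤ (t:ℕ)) :
    sigma p n (mul p n (ebar p n s) y) = - mul p n (ebar p n s) (sigma p n y) := by
  conv_lhs => rw [mul_expand]
  conv_rhs => rw [finsupp_decomp p n y]
  rw [map_sum]
  rw [map_sum (sigma p n) (fun b => Finsupp.single b (y b)) y.support]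
  simp only [mul_eq_mulLeft, map_sum, ← Finset.sum_neg_distrib]
  refine Finset.sum_congr rfl fun b hb => ?_
  have h := star p n s hp hs1 hsn b (y b) (hy b hb)
  simp only [mul_eq_mulLeft] at h
  exact h

theorem mul_zero_right (p n : ℕ) (x : A p n) : mul p n x 0 = 0 := by
  rw [mul_eq_mulLeft, map_zero]

open Fin.NatCast in
theorem mul_ebar_single (p n s : ℕ) (hp : 1 ≤ p) (hs1 : 1 ≤ s) (hsn : s ≤ n)
    (T : Finset (Fin (n+1))) (k : ℕ) (c : ZMod p) (hT : ∀ t ∈ T, s ≤ (t:ℕ)) :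
    mul p n (ebar p n s) (Finsupp.single (T, k) c)
      = c • ((if (s : Fin (n+1)) ∈ T then 0
            else Finsupp.single (insert (s : Fin (n+1)) T, k) (1 : ZMod p))
          - Finsupp.single (insert ((s-1:ℕ) : Fin (n+1)) T, (p^s - p^(s-1)) + k) 1) := by
  set i1 : Fin (n+1) := (s : Fin (n+1)) with hi1def
  set i0 : Fin (n+1) := ((s-1 : ℕ) : Fin (n+1)) with hi0def
  have hv1 : (i1:ℕ) = s := Fin.val_cast_of_lt (by omega)
  have hv0 : (i0:ℕ) = s - 1 := Fin.val_cast_of_lt (by omega)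
  have h2i1 : ∀ t ∈ T, ¬ t < i1 := by
    intro t ht hlt; have := hT t ht; rw [Fin.lt_def, hv1] at hlt; omega
  have hi0T : i0 ∉ T := by intro h; have := hT _ h; rw [hv0] at this; omega
  have h2i0 : ∀ t ∈ T, ¬ t < i0 := by
    intro t ht hlt; have := hT t ht; rw [Fin.lt_def, hv0] at hlt; omega
  rw [single_eq_smul_one, mul_smul_right]
  congr 1
  have hebar : ebar p n s
      = Finsupp.single ({i1}, 0) (1:ZMod p)
        - Finsupp.single ({i0}, p^s - p^(s-1)) 1 := rfl
  rw [hebar, mul_sub_left]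
  congr 1
  · by_cases h : i1 ∈ T
    · rw [if_pos h, mul_eps_single_mem p n i1 0 T k 1 h]
    · rw [if_neg h, mul_eps_single_notmem p n i1 0 T k 1 h h2i1, one_smul, zero_add]
  · rw [mul_eps_single_notmem p n i0 (p^s - p^(s-1)) T k 1 hi0T h2i0, one_smul]

open Fin.NatCast in
theorem support_mul_ebar_single (p n s : ℕ) (hp : 1 ≤ p) (hs1 : 1 ≤ s) (hsn : s ≤ n)
    (b : Idx n) (c : ZMod p) (hT : ∀ t ∈ b.1, s ≤ (t:ℕ)) :
    ∀ b' ∈ (mul p n (ebar p n s) (Finsupp.single b c)).support,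
      (∀ t ∈ b'.1, s - 1 ≤ (t:ℕ)) ∧ (b'.2 = b.2 ∨ b'.2 = (p^s - p^(s-1)) + b.2) := by
  obtain ⟨T, k⟩ := b
  intro b' hb'
  rw [mul_ebar_single p n s hp hs1 hsn T k c hT] at hb'
  have h1 := Finsupp.support_smul hb'
  have h2 := Finsupp.support_sub (ι := Idx n) h1
  simp only [Finset.mem_union] at h2
  have hv1 : (((s : Fin (n+1))) : ℕ) = s := Fin.val_cast_of_lt (by omega)
  have hv0 : ((((s-1:ℕ) : Fin (n+1))) : ℕ) = s - 1 := Fin.val_cast_of_lt (by omega)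
  have hins : ∀ (i : Fin (n+1)), (i:ℕ) = s ∨ (i:ℕ) = s - 1 → ∀ t ∈ insert i T, s - 1 ≤ (t:ℕ) := by
    intro i hi t ht
    rcases Finset.mem_insert.mp ht with h | h
    · subst h; omega
    · have := hT t h; omega
  rcases h2 with h | h
  · by_cases hc : (s : Fin (n+1)) ∈ T
    · rw [if_pos hc] at h; simp at h
    · rw [if_neg hc] at h
      have := Finsupp.support_single_subset h
      rw [Finset.mem_singleton] at this
      subst this
      exact ⟨hins _ (Or.inl hv1), Or.inl rfl⟩
  · have := Finsupp.support_single_subset h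
    rw [Finset.mem_singleton] at this
    subst this
    exact ⟨hins _ (Or.inr hv0), Or.inr rfl⟩

noncomputable def shiftm (p n m : ℕ) : A p n →ₗ[ZMod p] A p n :=
  Finsupp.lsum (ZMod p) fun b =>
    LinearMap.toSpanSingleton (ZMod p) (A p n) (Finsupp.single (b.1, b.2 + m) 1)

theorem shiftm_single (p n m : ℕ) (b : Idx n) (c : ZMod p) :
    shiftm p n m (Finsupp.single b c) = c • Finsupp.single (b.1, b.2 + m) 1 := by
  simp [shiftm, Finsupp.lsum_single, LinearMap.toSpanSingleton_apply]

theorem mul_mup (p n m : ℕ) (x : A p n) : mul p n x (mup p n m) = shiftm p n m x := by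
  rw [mul, mup]
  have key : ∀ (b : Idx n) (a : ZMod p),
      ((Finsupp.single ((∅ : Finset (Fin (n+1))), m) (1 : ZMod p)).sum
        fun c d => (a * d) • mulB p n b c) = a • Finsupp.single (b.1, b.2 + m) 1 := by
    intro b a
    rw [Finsupp.sum_single_index (by simp)]
    rw [mul_one, mulB, if_pos (Finset.disjoint_empty_right _)]
    have hsign : msign p n b.1 ∅ = 1 := by simp [msign]
    rw [hsign, one_smul]
    rw [show b.1 ∪ ((∅ : Finset (Fin (n+1))), m).1 = b.1 from Finset.union_empty _]
  have hr : shiftm p n m x = x.sum fun b a => a • Finsupp.single (b.1, b.2 + m) 1 := by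
    rw [shiftm, Finsupp.lsum_apply]
    exact Finsupp.sum_congr fun b hb => LinearMap.toSpanSingleton_apply _ _ _ _
  rw [hr]
  exact Finsupp.sum_congr fun b hb => key b (x b)

theorem sigma_shiftm (p n m : ℕ) (x : A p n) :
    sigma p n (shiftm p n m x) = shiftm p n m (sigma p n x) := by
  have h : (sigma p n).comp (shiftm p n m) = (shiftm p n m).comp (sigma p n) := by
    apply Finsupp.lhom_ext
    intro b c
    rw [LinearMap.comp_apply, LinearMap.comp_apply, shiftm_single, map_smul, sigma_single,
      one_smul, sigma_single, map_smul, map_sum]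
    congr 1
    apply Finset.sum_congr rfl
    intro u hu
    rw [map_smul, shiftm_single, one_smul, add_right_comm]
  exact LinearMap.congr_fun h x

theorem choose_pow_zmod (p : ℕ) (hp : p.Prime) :
    ∀ (m j : ℕ), j % p^(m+1) < p^m → ((j.choose (p^m) : ZMod p)) = 0 := by
  haveI : Fact p.Prime := ⟨hp⟩
  intro m
  induction m with
  | zero =>
    intro j hj
    rw [pow_zero, Nat.choose_one_right]
    simp only [pow_zero, zero_add, pow_one] at hj
    have : p ∣ j := Nat.dvd_of_mod_eq_zero (by omega)
    exact (ZMod.natCast_eq_zero_iff j p).mpr this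
  | succ m ih =>
    intro j hj
    have h := Choose.choose_modEq_choose_mod_mul_choose_div_nat (p := p) (n := j) (k := p^(m+1))
    have hcast : ((j.choose (p^(m+1)) : ZMod p))
        = (((j % p).choose (p^(m+1) % p) * ((j / p).choose (p^(m+1) / p)) : ℕ) : ZMod p) :=
      (ZMod.natCast_eq_natCast_iff _ _ _).mpr h
    have h1 : p^(m+1) % p = 0 := by
      rw [pow_succ]; exact Nat.mul_mod_left _ _
    have h2 : p^(m+1) / p = p^m := by
      rw [pow_succ]; exact Nat.mul_div_cancel _ hp.pos
    rw [hcast, h1, h2, Nat.choose_zero_right, one_mul]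
    apply ih
    have hd : j / p % p^(m+1) = j % (p * p^(m+1)) / p := (Nat.mod_mul_right_div_self j p (p^(m+1))).symm
    have hpp : p * p^(m+1) = p^(m+1+1) := (pow_succ' p (m+1)).symm
    rw [hd, hpp, Nat.div_lt_iff_lt_mul hp.pos]
    calc j % p^(m+1+1) < p^(m+1) := hj
    _ = p^m * p := pow_succ p m

def SigInv (p n m : ℕ) (y : A p n) : Prop :=
  sigma p n y = 0 ∧ ∀ b ∈ y.support, (∀ t ∈ b.1, m - 1 ≤ (t:ℕ)) ∧ b.2 + p^(m-1) ≤ p^n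

theorem inv_step (p n s m : ℕ) (hp : 1 ≤ p) (hs1 : 1 ≤ s) (hsn : s ≤ n) (hsm : s < m)
    (y : A p n) (h : SigInv p n m y) : SigInv p n s (mul p n (ebar p n s) y) := by
  have hsup : ∀ b ∈ y.support, ∀ t ∈ b.1, s ≤ (t:ℕ) := fun b hb t ht => by
    have := (h.2 b hb).1 t ht; omega
  constructor
  · rw [sigma_mul_ebar p n s hp hs1 hsn y hsup, h.1, mul_zero_right, neg_zero]
  · intro b' hb'
    rw [mul_expand] at hb'
    obtain ⟨b, hb, hbmem⟩ := Finset.mem_biUnion.mp (Finsupp.support_finset_sum hb')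
    obtain ⟨hT', hexp⟩ :=
      support_mul_ebar_single p n s hp hs1 hsn b (y b) (hsup b hb) b' hbmem
    refine ⟨hT', ?_⟩
    have hbb := (h.2 b hb).2
    have hp1 : p^(s-1) ≤ p^(m-1) := Nat.pow_le_pow_right hp (by omega)
    have hp2 : p^s ≤ p^(m-1) := Nat.pow_le_pow_right hp (by omega)
    have hps : p^(s-1) ≤ p^s := Nat.pow_le_pow_right hp (by omega)
    rcases hexp with h1 | h1 <;> omega

theorem inv_fold (p n : ℕ) (hp : 1 ≤ p) : ∀ (l : List ℕ), l.Pairwise (· < ·) →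
    (∀ x ∈ l, 1 ≤ x ∧ x ≤ n) →
    SigInv p n (l.headD (n+1)) (l.foldr (fun s acc => mul p n (ebar p n s) acc) (mup p n 0)) := by
  intro l
  induction l with
  | nil =>
    intro _ _
    simp only [List.foldr_nil, List.headD_nil]
    constructor
    · rw [mup, sigma_single]; simp
    · intro b hb
      have := Finsupp.support_single_subset hb
      rw [Finset.mem_singleton] at this
      subst this
      constructor
      · intro t ht; exact absurd ht (Finset.notMem_empty t)
      · simp
  | cons s l ih =>
    intro hsort hmem
    have hlt : ∀ x ∈ l, s < x := fun x hx => (List.pairwise_cons.mp hsort).1 x hx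
    have h1 := ih (List.pairwise_cons.mp hsort).2 (fun x hx => hmem x (List.mem_cons_of_mem _ hx))
    have hs1 : 1 ≤ s := (hmem s (List.mem_cons_self)).1
    have hsn : s ≤ n := (hmem s (List.mem_cons_self)).2
    have hsm : s < l.headD (n+1) := by
      cases l with
      | nil => simpa using Nat.lt_succ_of_le hsn
      | cons a l' => exact hlt a (List.mem_cons_self)
    exact inv_step p n s _ hp hs1 hsn hsm _ h1

theorem ebar_mem_K' (p n : ℕ) (hp : p.Prime) (hn : 1 ≤ n) :
    (∀ S : Finset ℕ, S ⊆ Finset.Icc 1 n → ∀ t : ℕ,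
      cap p n (p ^ n) (mul p n (ebarProd p n S) (mup p n (t * p ^ (n + 1)))) = 0 ∧
      cap p n (p ^ n) (sigma p n (mul p n (ebarProd p n S) (mup p n (t * p ^ (n + 1))))) = 0) ∧
    ∀ x ∈ Submodule.span (ZMod p)
        (Set.range fun q : {S : Finset ℕ // S ⊆ Finset.Icc 1 n} × ℕ =>
          mul p n (ebarProd p n q.1.1) (mup p n (q.2 * p ^ (n + 1)))),
      cap p n (p ^ n) x = 0 ∧ cap p n (p ^ n) (sigma p n x) = 0 := by
  haveI : Fact p.Prime := ⟨hp⟩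
  have hp1 : 1 ≤ p := hp.pos
  have part1 : ∀ S : Finset ℕ, S ⊆ Finset.Icc 1 n → ∀ t : ℕ,
      cap p n (p ^ n) (mul p n (ebarProd p n S) (mup p n (t * p ^ (n + 1)))) = 0 ∧
      cap p n (p ^ n) (sigma p n (mul p n (ebarProd p n S) (mup p n (t * p ^ (n + 1))))) = 0 := by
    intro S hS t
    have hsort : (S.sort (· ≤ ·)).Pairwise (· < ·) := (Finset.sortedLT_sort S).pairwise
    have hmem : ∀ x ∈ S.sort (· ≤ ·), 1 ≤ x ∧ x ≤ n := by
      intro x hx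
      exact Finset.mem_Icc.mp (hS ((Finset.mem_sort _).mp hx))
    have hinv : SigInv p n (((S.sort (· ≤ ·)).headD (n+1))) (ebarProd p n S) :=
      inv_fold p n hp1 (S.sort (· ≤ ·)) hsort hmem
    set M := (S.sort (· ≤ ·)).headD (n+1) with hM
    set Y := ebarProd p n S with hY
    have hsigY : sigma p n Y = 0 := hinv.1
    have hexpY : ∀ b ∈ Y.support, b.2 < p^n := by
      intro b hb
      have h2 := (hinv.2 b hb).2
      have h3 : 1 ≤ p^(M-1) := Nat.one_le_pow _ _ hp.pos
      omega
    rw [mul_mup]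
    constructor
    · have hdec : shiftm p n (t * p^(n+1)) Y
          = ∑ b ∈ Y.support, shiftm p n (t * p^(n+1)) (Finsupp.single b (Y b)) := by
        conv_lhs => rw [finsupp_decomp p n Y]
        exact map_sum _ _ _
      rw [hdec, map_sum]
      apply Finset.sum_eq_zero
      intro b hb
      rw [shiftm_single, map_smul, cap_single, one_smul]
      have hcz : ((b.2 + t * p^(n+1)).choose (p^n) : ZMod p) = 0 := by
        apply choose_pow_zmod p hp n
        have hmod : (b.2 + t * p^(n+1)) % p^(n+1) = b.2 % p^(n+1) :=
          Nat.add_mul_mod_self_right _ _ _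
        rw [hmod, Nat.mod_eq_of_lt
          (lt_of_lt_of_le (hexpY b hb) (Nat.pow_le_pow_right hp1 (by omega)))]
        exact hexpY b hb
      rw [hcz, zero_smul, smul_zero]
    · rw [sigma_shiftm, hsigY, map_zero, map_zero]
  refine ⟨part1, ?_⟩
  intro x hx
  have hrange : (Set.range fun q : {S : Finset ℕ // S ⊆ Finset.Icc 1 n} × ℕ =>
      mul p n (ebarProd p n q.1.1) (mup p n (q.2 * p ^ (n + 1))))
      ⊆ ↑(LinearMap.ker (cap p n (p^n)) ⊓
          LinearMap.ker ((cap p n (p^n)).comp (sigma p n))) := by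
    rintro _ ⟨q, rfl⟩
    have h := part1 q.1.1 q.1.2 q.2
    exact Submodule.mem_inf.mpr
      ⟨LinearMap.mem_ker.mpr h.1, LinearMap.mem_ker.mpr (by simpa using h.2)⟩
  have hxk := Submodule.span_le.mpr hrange hx
  obtain ⟨h1, h2⟩ := Submodule.mem_inf.mp hxk
  exact ⟨LinearMap.mem_ker.mp h1, by simpa using LinearMap.mem_ker.mp h2⟩

/-- For every `S ⊆ {1, …, n}` and every `t ≥ 0`, the element `ε̄_S μ^{t p^{n+1}}`
satisfies both `(ε̄_S μ^{t p^{n+1}}) ∩ c_{p^n} = 0` and `σ(ε̄_S μ^{t p^{n+1}}) ∩ c_{p^n} = 0`;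
consequently the free `𝔽_p[μ^{p^{n+1}}]`-module `Λ(ε̄_1, …, ε̄_n) ⊗ 𝔽_p[μ^{p^{n+1}}]`
(the span of these elements) is contained in
`K = ker(− ∩ c_{p^n}) ∩ ker(σ(−) ∩ c_{p^n})`. -/
theorem ebar_mem_K (p n : ℕ) (hp : p.Prime) (hn : 1 ≤ n) :
    (∀ S : Finset ℕ, S ⊆ Finset.Icc 1 n → ∀ t : ℕ,
      cap p n (p ^ n) (mul p n (ebarProd p n S) (mup p n (t * p ^ (n + 1)))) = 0 ∧
      cap p n (p ^ n) (sigma p n (mul p n (ebarProd p n S) (mup p n (t * p ^ (n + 1))))) = 0) ∧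
    ∀ x ∈ Submodule.span (ZMod p)
        (Set.range fun q : {S : Finset ℕ // S ⊆ Finset.Icc 1 n} × ℕ =>
          mul p n (ebarProd p n q.1.1) (mup p n (q.2 * p ^ (n + 1)))),
      cap p n (p ^ n) x = 0 ∧ cap p n (p ^ n) (sigma p n x) = 0 := by
  exact ebar_mem_K' p n hp hn
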